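/- Left μ-substitution of a non-λ-abstraction normal term into a normal term yields a term normal for {β, μ', ρ, ε} whose only μ-redexes are of the form [α](N)U when N is a μ-abstraction; in particular, if N is not a μ-abstraction, then M[α:=_l N] is normal for all of {β, μ, μ', ρ, ε}. -/
import Mathlib


namespace LMu

/-- λμ-terms: variables, λ-abstraction, application, bracket [α]M, μ-abstraction. -/
inductive Trm : Type
  | var : ℕ → Trm
  | lam : ℕ → Trm → Trm
  | app : Trm → Trm → Trm
  | brk : ℕ → Trm → Trm
  | mu  : ℕ → Trm → Trm
deriving DecidableEq

/-- α-translation: replace every subterm [α]N by N. -/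
def trans (a : ℕ) : Trm → Trm
  | .var x => .var x
  | .lam x M => .lam x (trans a M)
  | .app M N => .app (trans a M) (trans a N)
  | .brk b M => if b = a then trans a M else .brk b (trans a M)
  | .mu b M => .mu b (trans a M)

/-- Renaming of free occurrences of the μ-variable a by b. -/
def renMu (a b : ℕ) : Trm → Trm
  | .var x => .var x
  | .lam x M => .lam x (renMu a b M)
  | .app M N => .app (renMu a b M) (renMu a b N)
  | .brk c M => .brk (if c = a then b else c) (renMu a b M)
  | .mu c M => if c = a then .mu c M else .mu c (renMu a b M)

/-- λ-substitution M[x:=N]. -/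
def subL (x : ℕ) (N : Trm) : Trm → Trm
  | .var y => if y = x then N else .var y
  | .lam y M => if y = x then .lam y M else .lam y (subL x N M)
  | .app M₁ M₂ => .app (subL x N M₁) (subL x N M₂)
  | .brk a M => .brk a (subL x N M)
  | .mu a M => .mu a (subL x N M)

/-- Right μ-substitution M[α:=_r N]: replace each [α]P by [α](P)N. -/
def subR (a : ℕ) (N : Trm) : Trm → Trm
  | .var x => .var x
  | .lam x M => .lam x (subR a N M)
  | .app M₁ M₂ => .app (subR a N M₁) (subR a N M₂)
  | .brk b M => if b = a then .brk b (.app (subR a N M) N) else .brk b (subR a N M)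
  | .mu b M => if b = a then .mu b M else .mu b (subR a N M)

/-- Left μ-substitution M[α:=_l N]: replace each [α]P by [α](N)P. -/
def subLmu (a : ℕ) (N : Trm) : Trm → Trm
  | .var x => .var x
  | .lam x M => .lam x (subLmu a N M)
  | .app M₁ M₂ => .app (subLmu a N M₁) (subLmu a N M₂)
  | .brk b M => if b = a then .brk b (.app N (subLmu a N M)) else .brk b (subLmu a N M)
  | .mu b M => if b = a then .mu b M else .mu b (subLmu a N M)

/-- Free μ-variables. -/
def fvMu : Trm → Finset ℕ
  | .var _ => ∅
  | .lam _ M => fvMu M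
  | .app M N => fvMu M ∪ fvMu N
  | .brk a M => insert a (fvMu M)
  | .mu a M => fvMu M \ {a}

/-- Complexity of a term. -/
def cxty : Trm → ℕ
  | .var _ => 1
  | .lam _ M => cxty M + 1
  | .app M N => cxty M + cxty N + 1
  | .brk _ M => cxty M + 1
  | .mu _ M => cxty M + 1

inductive Rule | beta | mu | mu' | rho | theta | eps
deriving DecidableEq

/-- Head (root) reduction for each rule. -/
inductive Head : Rule → Trm → Trm → Prop
  | beta (x M N) : Head .beta (.app (.lam x M) N) (subL x N M)
  | mu (a M N) : Head .mu (.app (.mu a M) N) (.mu a (subR a N M))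
  | mu' (a M N) : Head .mu' (.app N (.mu a M)) (.mu a (subLmu a N M))
  | rho (a b M) : Head .rho (.brk b (.mu a M)) (renMu a b M)
  | theta (a M) : a ∉ fvMu M → Head .theta (.mu a (.brk a M)) M
  | eps (a b M) : Head .eps (.mu a (.mu b M)) (.mu a (trans b M))

/-- One-step reduction by any rule in S, anywhere in the term. -/
inductive Step (S : Set Rule) : Trm → Trm → Prop
  | head {r M N} : r ∈ S → Head r M N → Step S M N
  | lam {M N} (x) : Step S M N → Step S (.lam x M) (.lam x N)
  | appl {M M'} (N) : Step S M M' → Step S (.app M N) (.app M' N)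
  | appr {N N'} (M) : Step S N N' → Step S (.app M N) (.app M N')
  | brk {M N} (a) : Step S M N → Step S (.brk a M) (.brk a N)
  | mu {M N} (a) : Step S M N → Step S (.mu a M) (.mu a N)

def RS : Set Rule := {.beta, .mu, .rho, .theta, .eps}
def RS' : Set Rule := {.beta, .mu, .mu', .rho, .eps}
def RAll : Set Rule := {.beta, .mu, .mu', .rho, .theta, .eps}

/-- Normal form for the rule set S. -/
def NF (S : Set Rule) (M : Trm) : Prop := ∀ N, ¬ Step S M N

/-- Strong normalization: every reduction sequence terminates. -/
def SN (S : Set Rule) (M : Trm) : Prop := Acc (fun a b => Step S b a) M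

def Steps (S : Set Rule) : Trm → Trm → Prop := Relation.ReflTransGen (Step S)

/-- Weak normalization: reduces to a normal form. -/
def WN (S : Set Rule) (M : Trm) : Prop := ∃ N, Steps S M N ∧ NF S N

/-- There is a reduction sequence of length n starting from M. -/
def RedSeq (S : Set Rule) : ℕ → Trm → Prop
  | 0, _ => True
  | n + 1, M => ∃ N, Step S M N ∧ RedSeq S n N

/-- Simple types. -/
inductive Ty | atom : ℕ → Ty | bot : Ty | arr : Ty → Ty → Ty

abbrev Ctx := ℕ → Option Ty

/-- Typing judgment Γ ⊢ M : A ; Θ of the simply typed λμ-calculus. -/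
inductive Typing : Ctx → Trm → Ty → Ctx → Prop
  | ax {Γ Θ x A} : Γ x = some A → Typing Γ (.var x) A Θ
  | lam {Γ Θ x M A B} : Typing (Function.update Γ x (some A)) M B Θ →
      Typing Γ (.lam x M) (.arr A B) Θ
  | app {Γ Θ M N A B} : Typing Γ M (.arr A B) Θ → Typing Γ N A Θ →
      Typing Γ (.app M N) B Θ
  | brk {Γ Θ a M A} : Typing Γ M A Θ → Θ a = some A → Typing Γ (.brk a M) .bot Θ
  | mu {Γ Θ a M A} : Typing Γ M .bot (Function.update Θ a (some A)) →
      Typing Γ (.mu a M) A Θ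

def Typable (M : Trm) : Prop := ∃ Γ A Θ, Typing Γ M A Θ

/-- Subterm relation. -/
inductive Sub : Trm → Trm → Prop
  | refl (M) : Sub M M
  | lam {P M} (x) : Sub P M → Sub P (.lam x M)
  | appl {P M} (N) : Sub P M → Sub P (.app M N)
  | appr {P N} (M) : Sub P N → Sub P (.app M N)
  | brk {P M} (a) : Sub P M → Sub P (.brk a M)
  | mu {P M} (a) : Sub P M → Sub P (.mu a M)

/-- M is α-clean: no subterm [α]U with U a λ-abstraction. -/
def Clean (a : ℕ) (M : Trm) : Prop :=
  ∀ U, Sub (.brk a U) M → ∀ x P, U ≠ .lam x P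

end LMu
namespace LMu

def S0 : Set Rule := {Rule.beta, Rule.mu', Rule.rho, Rule.eps}

lemma beta_RS' : Rule.beta ∈ RS' := by simp [RS']
lemma mu_RS' : Rule.mu ∈ RS' := by simp [RS']
lemma mu'_RS' : Rule.mu' ∈ RS' := by simp [RS']
lemma rho_RS' : Rule.rho ∈ RS' := by simp [RS']
lemma eps_RS' : Rule.eps ∈ RS' := by simp [RS']

lemma step_mono {S S' : Set Rule} (h : S ⊆ S') {M N} (hs : Step S M N) : Step S' M N := by
  induction hs with
  | head hr hh => exact .head (h hr) hh
  | lam x _ ih => exact .lam x ih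
  | appl N _ ih => exact .appl N ih
  | appr M _ ih => exact .appr M ih
  | brk a _ ih => exact .brk a ih
  | mu a _ ih => exact .mu a ih

lemma S0_sub_RS' : S0 ⊆ RS' := by
  intro r hr; simp [S0, RS'] at hr ⊢; tauto

lemma nf_mono {S S' : Set Rule} (h : S ⊆ S') {M} (hM : NF S' M) : NF S M :=
  fun T hT => hM T (step_mono h hT)

lemma nf_lam {S x M} (h : NF S (.lam x M)) : NF S M :=
  fun _ hs => h _ (Step.lam x hs)
lemma nf_appl {S M N} (h : NF S (.app M N)) : NF S M :=
  fun _ hs => h _ (Step.appl N hs)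
lemma nf_appr {S M N} (h : NF S (.app M N)) : NF S N :=
  fun _ hs => h _ (Step.appr M hs)
lemma nf_brk {S a M} (h : NF S (.brk a M)) : NF S M :=
  fun _ hs => h _ (Step.brk a hs)
lemma nf_mu {S a M} (h : NF S (.mu a M)) : NF S M :=
  fun _ hs => h _ (Step.mu a hs)

lemma subLmu_eq_lam {a N M x P} (h : subLmu a N M = .lam x P) :
    ∃ P', M = .lam x P' := by
  cases M with
  | var y => simp [subLmu] at h
  | lam y M1 => simp [subLmu] at h; exact ⟨M1, by simp [h.1]⟩
  | app M1 M2 => simp [subLmu] at h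
  | brk b M1 => simp only [subLmu] at h; split_ifs at h <;> simp at h
  | mu b M1 => simp only [subLmu] at h; split_ifs at h <;> simp at h

lemma subLmu_eq_mu {a N M b Q} (h : subLmu a N M = .mu b Q) :
    ∃ Q', M = .mu b Q' := by
  cases M with
  | var y => simp [subLmu] at h
  | lam y M1 => simp [subLmu] at h
  | app M1 M2 => simp [subLmu] at h
  | brk c M1 => simp only [subLmu] at h; split_ifs at h <;> simp at h
  | mu c M1 =>
    simp only [subLmu] at h
    split_ifs at h <;> (simp at h; exact ⟨M1, by simp [h.1]⟩)

lemma sub_step {S : Set Rule} {P T Q} (hsub : Sub P T) (hst : Step S P Q) :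
    ∃ T', Step S T T' := by
  induction hsub with
  | refl => exact ⟨Q, hst⟩
  | lam x _ ih => obtain ⟨T', h⟩ := ih; exact ⟨_, Step.lam x h⟩
  | appl N _ ih => obtain ⟨T', h⟩ := ih; exact ⟨_, Step.appl N h⟩
  | appr M _ ih => obtain ⟨T', h⟩ := ih; exact ⟨_, Step.appr M h⟩
  | brk a _ ih => obtain ⟨T', h⟩ := ih; exact ⟨_, Step.brk a h⟩
  | mu a _ ih => obtain ⟨T', h⟩ := ih; exact ⟨_, Step.mu a h⟩

lemma step_decomp {X T} (h : Step RS' X T) :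
    Step S0 X T ∨ ∃ b Q P, Sub (.app (.mu b Q) P) X := by
  induction h with
  | head hr hh =>
    rename_i r M' N'
    cases hh with
    | mu b Q P => exact Or.inr ⟨b, Q, P, Sub.refl _⟩
    | beta x M N => exact Or.inl (Step.head (by simp [S0]) (Head.beta x M N))
    | mu' b M N => exact Or.inl (Step.head (by simp [S0]) (Head.mu' b M N))
    | rho b c M => exact Or.inl (Step.head (by simp [S0]) (Head.rho b c M))
    | theta b M hb => exact absurd hr (by simp [RS'])
    | eps b c M => exact Or.inl (Step.head (by simp [S0]) (Head.eps b c M))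
  | lam x _ ih =>
    rcases ih with h | ⟨b, Q, P, hs⟩
    · exact Or.inl (Step.lam x h)
    · exact Or.inr ⟨b, Q, P, Sub.lam x hs⟩
  | appl N _ ih =>
    rcases ih with h | ⟨b, Q, P, hs⟩
    · exact Or.inl (Step.appl N h)
    · exact Or.inr ⟨b, Q, P, Sub.appl N hs⟩
  | appr M _ ih =>
    rcases ih with h | ⟨b, Q, P, hs⟩
    · exact Or.inl (Step.appr M h)
    · exact Or.inr ⟨b, Q, P, Sub.appr M hs⟩
  | brk a _ ih =>
    rcases ih with h | ⟨b, Q, P, hs⟩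
    · exact Or.inl (Step.brk a h)
    · exact Or.inr ⟨b, Q, P, Sub.brk a hs⟩
  | mu a _ ih =>
    rcases ih with h | ⟨b, Q, P, hs⟩
    · exact Or.inl (Step.mu a h)
    · exact Or.inr ⟨b, Q, P, Sub.mu a hs⟩

end LMu
namespace LMu

lemma head_app_inv {r X Y T} (h : Head r (.app X Y) T) :
    (∃ x M, X = .lam x M ∧ r = .beta) ∨ (∃ b M, X = .mu b M ∧ r = .mu) ∨
    (∃ b M, Y = .mu b M ∧ r = .mu') := by
  cases h with
  | beta x M => exact Or.inl ⟨x, M, rfl, rfl⟩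
  | mu b M => exact Or.inr (Or.inl ⟨b, M, rfl, rfl⟩)
  | mu' b M => exact Or.inr (Or.inr ⟨b, M, rfl, rfl⟩)

lemma head_brk_inv {r c X T} (h : Head r (.brk c X) T) :
    ∃ b M, X = .mu b M ∧ r = .rho := by
  cases h with
  | rho b _ M => exact ⟨b, M, rfl, rfl⟩

lemma head_mu_inv {r c X T} (h : Head r (.mu c X) T) :
    (∃ M, X = .brk c M ∧ r = .theta) ∨ (∃ b M, X = .mu b M ∧ r = .eps) := by
  cases h with
  | theta hb => exact Or.inl ⟨_, rfl, rfl⟩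
  | eps _ b M => exact Or.inr ⟨b, M, rfl, rfl⟩

lemma sub_app_inv {U X Y} (h : Sub U (.app X Y)) :
    U = .app X Y ∨ Sub U X ∨ Sub U Y := by
  cases h with
  | refl => exact Or.inl rfl
  | appl _ hs => exact Or.inr (Or.inl hs)
  | appr _ hs => exact Or.inr (Or.inr hs)

lemma sub_brk_inv {U c X} (h : Sub U (.brk c X)) : U = .brk c X ∨ Sub U X := by
  cases h with
  | refl => exact Or.inl rfl
  | brk _ hs => exact Or.inr hs

lemma sub_mu_inv {U c X} (h : Sub U (.mu c X)) : U = .mu c X ∨ Sub U X := by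
  cases h with
  | refl => exact Or.inl rfl
  | mu _ hs => exact Or.inr hs

end LMu
namespace LMu

lemma subLmu_main (a : ℕ) (N : Trm) (hN : NF RS' N) (hNlam : ∀ x N', N ≠ .lam x N') :
    ∀ M, NF RS' M →
      NF S0 (subLmu a N M) ∧
      (∀ b Q P, Sub (.app (.mu b Q) P) (subLmu a N M) →
        Trm.mu b Q = N ∧ Sub (.brk a (.app N P)) (subLmu a N M)) := by
  intro M
  induction M with
  | var x =>
    intro _
    refine ⟨fun T h => ?_, fun b Q P hsub => ?_⟩
    · cases h with
      | head hr hh => cases hh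
    · cases hsub
  | lam x M1 ih =>
    intro hM
    obtain ⟨ih1, ih2⟩ := ih (nf_lam hM)
    refine ⟨fun T h => ?_, fun b Q P hsub => ?_⟩
    · cases h with
      | head hr hh => cases hh
      | lam _ hs => exact ih1 _ hs
    · cases hsub with
      | lam _ hs =>
        obtain ⟨h1, h2⟩ := ih2 b Q P hs
        exact ⟨h1, Sub.lam _ h2⟩
  | app M1 M2 ih1 ih2 =>
    intro hM
    obtain ⟨ih1a, ih1b⟩ := ih1 (nf_appl hM)
    obtain ⟨ih2a, ih2b⟩ := ih2 (nf_appr hM)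
    simp only [subLmu]
    refine ⟨fun T h => ?_, fun b Q P hsub => ?_⟩
    · cases h with
      | head hr hh =>
        rcases head_app_inv hh with ⟨x, P, heq, rfl⟩ | ⟨b, Q, heq, rfl⟩ | ⟨b, Q, heq, rfl⟩
        · obtain ⟨P', rfl⟩ := subLmu_eq_lam heq
          exact hM _ (Step.head beta_RS' (Head.beta x P' M2))
        · exact absurd hr (by simp [S0])
        · obtain ⟨Q', rfl⟩ := subLmu_eq_mu heq
          exact hM _ (Step.head mu'_RS' (Head.mu' b Q' M1))
      | appl _ hs => exact ih1a _ hs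
      | appr _ hs => exact ih2a _ hs
    · rcases sub_app_inv hsub with heq | hs | hs
      · injection heq with h1 h2
        obtain ⟨Q', rfl⟩ := subLmu_eq_mu h1.symm
        exact absurd (Step.head mu_RS' (Head.mu b Q' M2)) (hM _)
      · obtain ⟨h1, h2⟩ := ih1b b Q P hs
        exact ⟨h1, Sub.appl _ h2⟩
      · obtain ⟨h1, h2⟩ := ih2b b Q P hs
        exact ⟨h1, Sub.appr _ h2⟩
  | brk c M1 ih =>
    intro hM
    obtain ⟨ihA, ihB⟩ := ih (nf_brk hM)
    by_cases hc : c = a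
    · subst hc
      have e : subLmu c N (Trm.brk c M1) = .brk c (.app N (subLmu c N M1)) := by
        simp [subLmu]
      rw [e]
      refine ⟨fun T h => ?_, fun b Q P hsub => ?_⟩
      · cases h with
        | head hr hh =>
          obtain ⟨b', M', heq, rfl⟩ := head_brk_inv hh
          simp at heq
        | brk _ hs =>
          cases hs with
          | head hr' hh' =>
            rcases head_app_inv hh' with ⟨x, P, heq, rfl⟩ | ⟨b, Q, heq, rfl⟩ | ⟨b, Q, heq, rfl⟩
            · exact hNlam x P heq
            · exact absurd hr' (by simp [S0])
            · obtain ⟨Q', rfl⟩ := subLmu_eq_mu heq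
              exact hM _ (Step.head rho_RS' (Head.rho b c Q'))
          | appl _ hs' => exact hN _ (step_mono S0_sub_RS' hs')
          | appr _ hs' => exact ihA _ hs'
      · rcases sub_brk_inv hsub with heq | hs
        · simp at heq
        · rcases sub_app_inv hs with heq | hs' | hs'
          · injection heq with h1 h2
            subst h2
            exact ⟨h1, Sub.refl _⟩
          · obtain ⟨T', hT'⟩ := sub_step hs' (Step.head mu_RS' (Head.mu b Q P))
            exact absurd hT' (hN _)
          · obtain ⟨h1, h2⟩ := ihB b Q P hs'
            exact ⟨h1, Sub.brk _ (Sub.appr _ h2)⟩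
    · have e : subLmu a N (Trm.brk c M1) = .brk c (subLmu a N M1) := by
        simp [subLmu, hc]
      rw [e]
      refine ⟨fun T h => ?_, fun b Q P hsub => ?_⟩
      · cases h with
        | head hr hh =>
          obtain ⟨b', M', heq, rfl⟩ := head_brk_inv hh
          obtain ⟨Q', rfl⟩ := subLmu_eq_mu heq
          exact hM _ (Step.head rho_RS' (Head.rho b' c Q'))
        | brk _ hs => exact ihA _ hs
      · rcases sub_brk_inv hsub with heq | hs
        · simp at heq
        · obtain ⟨h1, h2⟩ := ihB b Q P hs
          exact ⟨h1, Sub.brk _ h2⟩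
  | mu c M1 ih =>
    intro hM
    by_cases hc : c = a
    · subst hc
      have e : subLmu c N (Trm.mu c M1) = .mu c M1 := by simp [subLmu]
      rw [e]
      refine ⟨nf_mono S0_sub_RS' hM, fun b Q P hsub => ?_⟩
      obtain ⟨T', hT'⟩ := sub_step hsub (Step.head mu_RS' (Head.mu b Q P))
      exact absurd hT' (hM _)
    · obtain ⟨ihA, ihB⟩ := ih (nf_mu hM)
      have e : subLmu a N (Trm.mu c M1) = .mu c (subLmu a N M1) := by
        simp [subLmu, hc]
      rw [e]
      refine ⟨fun T h => ?_, fun b Q P hsub => ?_⟩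
      · cases h with
        | head hr hh =>
          rcases head_mu_inv hh with ⟨M', heq, rfl⟩ | ⟨b', M', heq, rfl⟩
          · exact absurd hr (by simp [S0])
          · obtain ⟨Q', rfl⟩ := subLmu_eq_mu heq
            exact hM _ (Step.head eps_RS' (Head.eps c b' Q'))
        | mu _ hs => exact ihA _ hs
      · rcases sub_mu_inv hsub with heq | hs
        · simp at heq
        · obtain ⟨h1, h2⟩ := ihB b Q P hs
          exact ⟨h1, Sub.mu _ h2⟩

end LMu

open LMu in
theorem subLmu_normal (M N : LMu.Trm) (a : ℕ)
    (hM : LMu.NF LMu.RS' M) (hN : LMu.NF LMu.RS' N)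
    (hNlam : ∀ x N', N ≠ .lam x N') :
    LMu.NF {LMu.Rule.beta, LMu.Rule.mu', LMu.Rule.rho, LMu.Rule.eps} (LMu.subLmu a N M) ∧
    (∀ b Q P, LMu.Sub (.app (.mu b Q) P) (LMu.subLmu a N M) →
      LMu.Trm.mu b Q = N ∧ LMu.Sub (.brk a (.app N P)) (LMu.subLmu a N M)) ∧
    ((∀ b N', N ≠ .mu b N') → LMu.NF LMu.RS' (LMu.subLmu a N M)) := by
  obtain ⟨h1, h2⟩ := LMu.subLmu_main a N hN hNlam M hM
  refine ⟨h1, h2, fun hNmu T hT => ?_⟩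
  rcases LMu.step_decomp hT with hs | ⟨b, Q, P, hsub⟩
  · exact h1 _ hs
  · exact hNmu b Q ((h2 b Q P hsub).1).symm
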